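/- arXiv:math/0611059 — 5 statements merged into one kernel-verified Lean document; each statement's English description precedes it below -/
import Mathlib

section
/- Let r : ℕ → ℕ → ℝ satisfy 0 ≤ r i j ≤ 1 whenever i < j, and r i j = r i m · r m j whenever i < m < j. Suppose there exist i₀ ∈ ℕ and δ > 0 such that r i₀ j ≥ δ for all j > i₀. Then there is a function L : ℕ → ℝ such that for every m > i₀ the sequence (r m j)_{j > m} converges to L m as j → ∞, and L m → 1 as m → ∞. -/
/-- The numerical core of Lemma 5.1: if the ratios `r i j` lie in `[0,1]`, satisfy the
cocycle identity `r i j = r i m * r m j`, and are bounded below by some `δ > 0` along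
one row `i₀`, then every later row converges and the limits tend to `1`. -/
theorem stmt1 (r : ℕ → ℕ → ℝ)
    (hbd : ∀ i j, i < j → 0 ≤ r i j ∧ r i j ≤ 1)
    (hcoc : ∀ i m j, i < m → m < j → r i j = r i m * r m j)
    (i₀ : ℕ) (δ : ℝ) (hδ : 0 < δ)
    (hlow : ∀ j, i₀ < j → δ ≤ r i₀ j) :
    ∃ L : ℕ → ℝ,
      (∀ m, i₀ < m → Filter.Tendsto (fun j => r m j) Filter.atTop (nhds (L m))) ∧
        Filter.Tendsto L Filter.atTop (nhds 1) := by
  have hpos : ∀ m, i₀ < m → 0 < r i₀ m := fun m hm => lt_of_lt_of_le hδ (hlow m hm)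
  set b : ℕ → ℝ := fun n => r i₀ (i₀ + 1 + n) with hb
  have hanti : Antitone b := by
    apply antitone_nat_of_succ_le
    intro n
    have h1 : i₀ < i₀ + 1 + n := by omega
    have h2 : i₀ + 1 + n < i₀ + 1 + (n + 1) := by omega
    have hc := hcoc i₀ (i₀ + 1 + n) (i₀ + 1 + (n + 1)) h1 h2
    have hle := (hbd _ _ h2).2
    have hge := (hbd _ _ h2).1
    simp only [hb]
    rw [hc]
    nlinarith [hpos _ h1]
  have hbdd : BddBelow (Set.range b) := ⟨δ, by rintro x ⟨n, rfl⟩; exact hlow _ (by omega)⟩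
  have hbt : Filter.Tendsto b Filter.atTop (nhds (⨅ n, b n)) :=
    tendsto_atTop_ciInf hanti hbdd
  set ℓ := ⨅ n, b n with hℓ
  have hℓδ : δ ≤ ℓ := le_ciInf fun n => hlow _ (by omega)
  have hℓpos : 0 < ℓ := lt_of_lt_of_le hδ hℓδ
  have hat : Filter.Tendsto (fun j => r i₀ j) Filter.atTop (nhds ℓ) := by
    have h1 : Filter.Tendsto (fun j => b (j - (i₀ + 1))) Filter.atTop (nhds ℓ) :=
      hbt.comp (Filter.tendsto_atTop_atTop.2 fun n => ⟨n + i₀ + 1, fun a ha => by omega⟩)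
    apply h1.congr'
    filter_upwards [Filter.eventually_gt_atTop i₀] with j hj
    simp only [hb]
    congr 1
    omega
  refine ⟨fun m => if i₀ < m then ℓ / r i₀ m else 1, ?_, ?_⟩
  · intro m hm
    simp only [if_pos hm]
    have h1 : Filter.Tendsto (fun j => r i₀ j / r i₀ m) Filter.atTop (nhds (ℓ / r i₀ m)) :=
      hat.div_const _
    apply h1.congr'
    filter_upwards [Filter.eventually_gt_atTop m] with j hj
    rw [hcoc i₀ m j hm hj, mul_div_cancel_left₀ _ (ne_of_gt (hpos m hm))]
  · have h1 : Filter.Tendsto (fun m => ℓ / r i₀ m) Filter.atTop (nhds (ℓ / ℓ)) :=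
      tendsto_const_nhds.div hat (ne_of_gt hℓpos)
    rw [div_self (ne_of_gt hℓpos)] at h1
    apply h1.congr'
    filter_upwards [Filter.eventually_gt_atTop i₀] with m hm
    rw [if_pos hm]
end

section
/- Let r : ℕ → ℕ → ℝ satisfy 0 ≤ r i j ≤ 1 whenever i < j, and r i j = r i m · r m j whenever i < m < j. Then exactly one of the following alternatives holds: either for every i the sequence (r i j)_{j > i} tends to 0 as j → ∞, or there exist i₀ ∈ ℕ and a function L : ℕ → ℝ such that for every m > i₀ the sequence (r m j)_{j > m} converges to L m as j → ∞, L m > 0 for all m > i₀, and L m → 1 as m → ∞. -/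
/-- The dichotomy of Lemma 5.1: for ratios `r i j` in `[0,1]` satisfying the cocycle
identity, either every row tends to `0`, or (exclusively) beyond some `i₀` every row
converges to a strictly positive limit and these limits tend to `1`. -/
theorem stmt2 (r : ℕ → ℕ → ℝ)
    (hbd : ∀ i j, i < j → 0 ≤ r i j ∧ r i j ≤ 1)
    (hcoc : ∀ i m j, i < m → m < j → r i j = r i m * r m j) :
    Xor'
      (∀ i, Filter.Tendsto (fun j => r i j) Filter.atTop (nhds 0))
      (∃ (i₀ : ℕ) (L : ℕ → ℝ),
        (∀ m, i₀ < m → Filter.Tendsto (fun j => r m j) Filter.atTop (nhds (L m))) ∧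
        (∀ m, i₀ < m → 0 < L m) ∧
        Filter.Tendsto L Filter.atTop (nhds 1)) := by
  classical
  -- rows are antitone beyond the diagonal
  have hmono : ∀ i a b, i < a → a ≤ b → r i b ≤ r i a := by
    intro i a b hia hab
    induction b, hab using Nat.le_induction with
    | base => exact le_refl _
    | succ b hb ih =>
      have hib : i < b := lt_of_lt_of_le hia hb
      have heq := hcoc i b (b + 1) hib (Nat.lt_succ_self b)
      calc r i (b + 1) = r i b * r b (b + 1) := heq
        _ ≤ r i b := mul_le_of_le_one_right (hbd i b hib).1 (hbd b (b + 1) (Nat.lt_succ_self b)).2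
        _ ≤ r i a := ih
  -- each row converges to its infimum
  have key : ∀ i, ∃ c, 0 ≤ c ∧ (∀ j, i < j → c ≤ r i j) ∧
      Filter.Tendsto (fun j => r i j) Filter.atTop (nhds c) := by
    intro i
    set g : ℕ → ℝ := fun j => r i (j + (i + 1)) with hg
    have hanti : Antitone g := fun a b hab =>
      hmono i (a + (i + 1)) (b + (i + 1)) (by omega) (by omega)
    have hbdd : BddBelow (Set.range g) := by
      refine ⟨0, ?_⟩
      rintro x ⟨j, rfl⟩
      exact (hbd i _ (by omega)).1
    have ht : Filter.Tendsto g Filter.atTop (nhds (⨅ j, g j)) :=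
      tendsto_atTop_ciInf hanti hbdd
    refine ⟨⨅ j, g j, le_ciInf fun j => (hbd i _ (by omega)).1, ?_, ?_⟩
    · intro j hij
      have h1 := ciInf_le hbdd (j - (i + 1))
      have h2 : j - (i + 1) + (i + 1) = j := Nat.sub_add_cancel hij
      simpa [hg, h2] using h1
    · exact (Filter.tendsto_add_atTop_iff_nat (i + 1)).mp ht
  choose L₀ hL0 hLle hLt using key
  by_cases h : ∀ i, L₀ i = 0
  · left
    constructor
    · intro i
      simpa [h i] using hLt i
    · rintro ⟨i₀, L, hLt', hpos, -⟩
      have h1 := hLt' (i₀ + 1) (Nat.lt_succ_self i₀)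
      have h2 : L (i₀ + 1) = L₀ (i₀ + 1) := tendsto_nhds_unique h1 (hLt (i₀ + 1))
      have h3 := hpos (i₀ + 1) (Nat.lt_succ_self i₀)
      rw [h2, h (i₀ + 1)] at h3
      exact lt_irrefl 0 h3
  · right
    push_neg at h
    obtain ⟨i₀, hi₀⟩ := h
    have hpos0 : 0 < L₀ i₀ := lt_of_le_of_ne (hL0 i₀) (Ne.symm hi₀)
    constructor
    · refine ⟨i₀, fun m => L₀ i₀ / r i₀ m, ?_, ?_, ?_⟩
      · intro m hm
        have hrm : 0 < r i₀ m := lt_of_lt_of_le hpos0 (hLle i₀ m hm)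
        have ht : Filter.Tendsto (fun j => r i₀ j / r i₀ m) Filter.atTop
            (nhds (L₀ i₀ / r i₀ m)) := (hLt i₀).div_const _
        refine Filter.Tendsto.congr' ?_ ht
        filter_upwards [Filter.eventually_gt_atTop m] with j hj
        rw [hcoc i₀ m j hm hj]
        field_simp
      · intro m hm
        have hrm : 0 < r i₀ m := lt_of_lt_of_le hpos0 (hLle i₀ m hm)
        exact div_pos hpos0 hrm
      · have ht : Filter.Tendsto (fun m => L₀ i₀ / r i₀ m) Filter.atTop
            (nhds (L₀ i₀ / L₀ i₀)) := tendsto_const_nhds.div (hLt i₀) hpos0.ne'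
        simpa [div_self hpos0.ne'] using ht
    · intro hP
      have := tendsto_nhds_unique (hP i₀) (hLt i₀)
      rw [← this] at hpos0
      exact lt_irrefl 0 hpos0
end

section
/- Let l, N ∈ ℕ and M : Fin N → ℕ. In the multivariate polynomial ring ℤ[X_{(i,k)} : (i,k) ∈ Fin l × Fin N], the coefficient of the squarefree monomial ∏_{(i,k)} X_{(i,k)} (exponent 1 in every variable) in the product ∏_{k ∈ Fin N} (1 + ∑_{i ∈ Fin l} X_{(i,k)})^{M k} equals ∏_{k ∈ Fin N} Nat.descFactorial (M k) l. In particular, if M k ≥ l for every k, this coefficient is nonzero. -/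
/-!
Polynomials in disjoint sets of variables multiply without interaction: the coefficient of a
monomial that splits along the variable blocks is the product of the blockwise coefficients.
The all-ones monomial on `Fin l × Fin N` splits into the all-ones monomials of the columns
`Fin l × {k}`, so it suffices to treat one factor `(1 + ∑ᵢ Xᵢ) ^ m` in `l` variables. Its
all-ones coefficient comes only from the degree-`l` term `(m choose l) (∑ᵢ Xᵢ) ^ l`, whose
squarefree coefficient is the multinomial `l!`, giving `l! (m choose l) = m(m-1)⋯(m-l+1)`.
-/

open MvPolynomial Function

theorem Finsupp.filter_add_eq_left_of_support_subset {α M : Type*} [AddZeroClass M] {S : Set α}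
    [DecidablePred (· ∈ S)] {a b : α →₀ M} (ha : ↑a.support ⊆ S) (hb : ↑b.support ⊆ Sᶜ) :
    (a + b).filter (· ∈ S) = a := by
  rw [Finsupp.filter_add, (Finsupp.filter_eq_self_iff _ _).2 fun x hx => ha (by simpa using hx),
    (Finsupp.filter_eq_zero_iff _ _).2 fun x hx => by simpa using mt (@hb x) (by simpa using hx),
    add_zero]

namespace MvPolynomial

variable {σ R : Type*} [CommSemiring R]

theorem support_subset_of_mem_supported {S : Set σ} {p : MvPolynomial σ R}
    (hp : p ∈ supported R S) {d : σ →₀ ℕ} (hd : coeff d p ≠ 0) : ↑d.support ⊆ S :=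
  fun x hx => mem_supported.1 hp ((mem_vars_iff_mem_support x).2 ⟨d, mem_support_iff.2 hd, hx⟩)

theorem coeff_add_mul_of_supported {S : Set σ} {p q : MvPolynomial σ R}
    (hp : p ∈ supported R S) (hq : q ∈ supported R Sᶜ) {d e : σ →₀ ℕ}
    (hd : ↑d.support ⊆ S) (he : ↑e.support ⊆ Sᶜ) :
    coeff (d + e) (p * q) = coeff d p * coeff e q := by
  classical
  rw [coeff_mul]
  refine Finset.sum_eq_single (d, e) (fun ⟨a, b⟩ hab hne => ?_) (fun h => (h (by simp)).elim)
  by_contra hab0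
  rw [Finset.HasAntidiagonal.mem_antidiagonal] at hab
  dsimp only at hab hab0
  have ha := support_subset_of_mem_supported hp (left_ne_zero_of_mul hab0)
  have hb := support_subset_of_mem_supported hq (right_ne_zero_of_mul hab0)
  have had : a = d := by
    rw [← Finsupp.filter_add_eq_left_of_support_subset ha hb, hab,
      Finsupp.filter_add_eq_left_of_support_subset hd he]
  subst had
  exact hne (by rw [add_left_cancel hab])

theorem coeff_sum_prod_of_supported {ι : Type*} {S : ι → Set σ} (hS : Pairwise (Disjoint on S))
    {p : ι → MvPolynomial σ R} (hp : ∀ i, p i ∈ supported R (S i))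
    {d : ι → σ →₀ ℕ} (hd : ∀ i, ↑(d i).support ⊆ S i) (s : Finset ι) :
    coeff (∑ i ∈ s, d i) (∏ i ∈ s, p i) = ∏ i ∈ s, coeff (d i) (p i) := by
  classical
  induction s using Finset.induction with
  | empty => simp
  | insert a s ha ih =>
    have hdisj : ∀ i ∈ s, S i ⊆ (S a)ᶜ := fun i hi =>
      (hS (ne_of_mem_of_not_mem hi ha)).subset_compl_right
    rw [Finset.sum_insert ha, Finset.prod_insert ha, Finset.prod_insert ha,
      coeff_add_mul_of_supported (hp a) _ (hd a), ih]
    · intro x hx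
      obtain ⟨i, hi, hxi⟩ := Finset.mem_biUnion.1 (Finsupp.support_finsetSum hx)
      exact hdisj i hi (hd i hxi)
    · exact prod_mem fun i hi => supported_mono (hdisj i hi) (hp i)

theorem coeff_equivFunOnFinite_symm_one_sum_X_pow [Fintype σ] (n : ℕ) :
    coeff (Finsupp.equivFunOnFinite.symm 1) ((∑ i, X i : MvPolynomial σ R) ^ n) =
      if Fintype.card σ = n then ((Fintype.card σ).factorial : R) else 0 := by
  classical
  have hsupp : (Finsupp.equivFunOnFinite.symm (1 : σ → ℕ)).support = Finset.univ := by
    ext; simp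
  rw [coeff_sum_X_pow_of_fintype, Finsupp.multinomial_eq, Finsupp.sum, hsupp]
  simp [Nat.multinomial]

theorem coeff_equivFunOnFinite_symm_one_one_add_sum_X_pow [Fintype σ] (m : ℕ) :
    coeff (Finsupp.equivFunOnFinite.symm 1) ((1 + ∑ i, X i : MvPolynomial σ R) ^ m) =
      m.descFactorial (Fintype.card σ) := by
  rw [add_comm, add_pow]
  simp only [one_pow, mul_one, coeff_sum, ← C_eq_coe_nat, coeff_C_mul, mul_comm _ (C _),
    coeff_equivFunOnFinite_symm_one_sum_X_pow, mul_ite, mul_zero, Finset.sum_ite_eq,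
    Finset.mem_range]
  split_ifs with h
  · rw [Nat.descFactorial_eq_factorial_mul_choose, Nat.cast_mul, mul_comm]
  · rw [Nat.descFactorial_eq_zero_iff_lt.2 (by omega), Nat.cast_zero]

theorem sum_mapDomain_prodMk_equivFunOnFinite_symm_one {ι : Type*} [Fintype σ] [Fintype ι] :
    ∑ k : ι, Finsupp.mapDomain (·, k) (Finsupp.equivFunOnFinite.symm (1 : σ → ℕ)) =
      Finsupp.equivFunOnFinite.symm 1 := by
  ext ⟨i, k⟩
  rw [Finsupp.finsetSum_apply, Finset.sum_eq_single k]
  · simp [Finsupp.mapDomain_apply (Prod.mk_left_injective k)]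
  · intro k' _ hk'
    refine Finsupp.mapDomain_of_notMem_range _ _ ?_
    rintro ⟨j, hj⟩
    exact hk' (congrArg Prod.snd hj)
  · simp

theorem coeff_equivFunOnFinite_symm_one_prod_rename_prodMk {ι : Type*} [Fintype σ] [Fintype ι]
    (q : ι → MvPolynomial σ R) :
    coeff (Finsupp.equivFunOnFinite.symm 1) (∏ k, rename (·, k) (q k)) =
      ∏ k, coeff (Finsupp.equivFunOnFinite.symm 1) (q k) := by
  classical
  rw [← sum_mapDomain_prodMk_equivFunOnFinite_symm_one, coeff_sum_prod_of_supported
    (S := fun k => Set.range (·, k)) (p := fun k => rename (·, k) (q k))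
    (d := fun k => Finsupp.mapDomain (·, k) (Finsupp.equivFunOnFinite.symm 1))]
  · simp only [coeff_rename_mapDomain _ (Prod.mk_left_injective _)]
  · intro k k' hkk'
    rw [Function.onFun, Set.disjoint_left]
    rintro _ ⟨i, rfl⟩ ⟨j, hj⟩
    exact hkk' (congrArg Prod.snd hj).symm
  · intro k
    rw [mem_supported]
    exact (Finset.coe_subset.2 (vars_rename _ _)).trans (by simp)
  · intro k
    exact (Finset.coe_subset.2 Finsupp.mapDomain_support).trans (by simp)

end MvPolynomial

/-- The key cohomological computation of Lemma 4.1: in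
`ℤ[X_{(i,k)} : (i,k) ∈ Fin l × Fin N]`, the coefficient of the top squarefree monomial
in `∏ₖ (1 + ∑ᵢ X_{(i,k)})^{M k}` equals `∏ₖ (M k)(M k - 1)⋯(M k - l + 1)`;
in particular it is nonzero if `M k ≥ l` for every `k`. -/
theorem stmt5 (l N : ℕ) (M : Fin N → ℕ) :
    MvPolynomial.coeff (Finsupp.equivFunOnFinite.symm fun _ : Fin l × Fin N => 1)
        (∏ k : Fin N,
          ((1 + ∑ i : Fin l, MvPolynomial.X (i, k)) ^ (M k) :
            MvPolynomial (Fin l × Fin N) ℤ))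
      = ∏ k : Fin N, (Nat.descFactorial (M k) l : ℤ) ∧
    ((∀ k, l ≤ M k) →
      MvPolynomial.coeff (Finsupp.equivFunOnFinite.symm fun _ : Fin l × Fin N => 1)
          (∏ k : Fin N,
            ((1 + ∑ i : Fin l, MvPolynomial.X (i, k)) ^ (M k) :
              MvPolynomial (Fin l × Fin N) ℤ)) ≠ 0) := by
  have hcoeff : MvPolynomial.coeff (Finsupp.equivFunOnFinite.symm fun _ : Fin l × Fin N => 1)
        (∏ k : Fin N, ((1 + ∑ i : Fin l, X (i, k)) ^ (M k) : MvPolynomial (Fin l × Fin N) ℤ))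
      = ∏ k : Fin N, (Nat.descFactorial (M k) l : ℤ) := by
    have hrename : ∀ k,
        ((1 + ∑ i : Fin l, X (i, k)) ^ (M k) : MvPolynomial (Fin l × Fin N) ℤ) =
          rename (·, k) ((1 + ∑ i, X i) ^ M k) := fun k => by simp
    simp only [hrename]
    rw [← Pi.one_def, coeff_equivFunOnFinite_symm_one_prod_rename_prodMk]
    simp only [coeff_equivFunOnFinite_symm_one_one_add_sum_X_pow, Fintype.card_fin]
  refine ⟨hcoeff, fun hM => ?_⟩
  rw [hcoeff]
  exact Finset.prod_ne_zero_iff.2 fun k _ =>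
    Nat.cast_ne_zero.2 (Nat.descFactorial_eq_zero_iff_lt.not.2 (hM k).not_gt)
end

section
/- Let p be a prime number. Let H be the additive subgroup of ℚ consisting of all rationals of the form a/p^n with a ∈ ℤ and n ∈ ℕ, and let G be an additive subgroup of ℚ such that for every x ∈ G there exists y ∈ G with p·y = x. Then the tensor product of ℤ-modules H ⊗_ℤ G is isomorphic, as a ℤ-module, to G. -/
open TensorProduct

/-- Section 8: if `H ≤ ℚ` is the subgroup of rationals of the form `a/pⁿ` and `G ≤ ℚ`
is a subgroup all of whose elements are divisible by `p` within `G` (i.e. `p^∞ ∈ P_G`),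
then `H ⊗_ℤ G ≅ G` as `ℤ`-modules. -/
theorem stmt6 (p : ℕ) (hp : p.Prime)
    (H : AddSubgroup ℚ)
    (hH : ∀ x : ℚ, x ∈ H ↔ ∃ (a : ℤ) (n : ℕ), x = (a : ℚ) / (p : ℚ) ^ n)
    (G : AddSubgroup ℚ)
    (hG : ∀ x ∈ G, ∃ y ∈ G, (p : ℚ) * y = x) :
    Nonempty ((H ⊗[ℤ] G) ≃ₗ[ℤ] G) := by
  have hp0 : (p : ℚ) ≠ 0 := Nat.cast_ne_zero.mpr hp.pos.ne'
  have hpn : ∀ n : ℕ, ((p : ℚ)) ^ n ≠ 0 := fun n => pow_ne_zero n hp0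
  -- every element of G is divisible by any power of p within G
  have hdiv : ∀ (n : ℕ) (x : ℚ), x ∈ G → x / (p : ℚ) ^ n ∈ G := by
    intro n
    induction n with
    | zero => intro x hx; simpa using hx
    | succ n ih =>
      intro x hx
      obtain ⟨y, hy, hpy⟩ := hG x hx
      have hxy : x / (p : ℚ) ^ (n + 1) = y / (p : ℚ) ^ n := by
        rw [← hpy]; field_simp; ring
      rw [hxy]; exact ih y hy
  have oneH : ∀ n : ℕ, (1 / (p : ℚ) ^ n) ∈ H := fun n => (hH _).mpr ⟨1, n, by push_cast; ring⟩
  have mulmem : ∀ (h : H) (g : G), (h : ℚ) * (g : ℚ) ∈ G := by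
    intro h g
    obtain ⟨a, n, hx⟩ := (hH h).mp h.2
    have h1 : (h : ℚ) * (g : ℚ) = a • ((g : ℚ) / (p : ℚ) ^ n) := by
      rw [hx, zsmul_eq_mul]; ring
    rw [h1]
    exact AddSubgroup.zsmul_mem G (hdiv n g g.2) a
  let B : H →ₗ[ℤ] G →ₗ[ℤ] G := LinearMap.mk₂ ℤ (fun h g => ⟨(h : ℚ) * g, mulmem h g⟩)
    (fun h h' g => by ext; push_cast; ring)
    (fun z h g => by ext; simp [zsmul_eq_mul]; ring)
    (fun h g g' => by ext; push_cast; ring)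
    (fun z h g => by ext; simp [zsmul_eq_mul]; ring)
  let φ := TensorProduct.lift B
  have rep : ∀ t : H ⊗[ℤ] G, ∃ (n : ℕ) (g : G),
      t = (⟨1 / (p : ℚ) ^ n, oneH n⟩ : H) ⊗ₜ[ℤ] g := by
    intro t
    induction t with
    | zero => exact ⟨0, 0, by simp⟩
    | tmul h g =>
      obtain ⟨a, n, hx⟩ := (hH h).mp h.2
      refine ⟨n, a • g, ?_⟩
      rw [← TensorProduct.smul_tmul]
      congr 1
      ext
      simp [zsmul_eq_mul, hx]
      ring
    | add t1 t2 ih1 ih2 =>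
      obtain ⟨n, g1, h1⟩ := ih1
      obtain ⟨m, g2, h2⟩ := ih2
      refine ⟨n + m, ((p : ℤ) ^ m) • g1 + ((p : ℤ) ^ n) • g2, ?_⟩
      rw [h1, h2, TensorProduct.tmul_add, ← TensorProduct.smul_tmul, ← TensorProduct.smul_tmul]
      congr 2 <;>
      · ext
        simp [zsmul_eq_mul]
        field_simp
        ring
  have inj : Function.Injective φ := by
    rw [injective_iff_map_eq_zero]
    intro t ht
    obtain ⟨n, g, rfl⟩ := rep t
    have hval : (1 / (p : ℚ) ^ n) * (g : ℚ) = 0 := congrArg Subtype.val ht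
    have hg0 : (g : ℚ) = 0 := by
      rcases mul_eq_zero.mp hval with h | h
      · exact absurd h (by positivity)
      · exact h
    have : g = 0 := Subtype.ext hg0
    simp [this]
  have surj : Function.Surjective φ := by
    intro g
    refine ⟨(⟨1 / (p : ℚ) ^ 0, oneH 0⟩ : H) ⊗ₜ[ℤ] g, ?_⟩
    ext
    show (1 / (p : ℚ) ^ 0) * (g : ℚ) = g
    simp
  exact ⟨LinearEquiv.ofBijective φ ⟨inj, surj⟩⟩
end

section
/- Let A be a unital C*-algebra, let a ∈ A be positive, and suppose there is θ > 0 such that the spectrum of a contains no point of the open interval (0, θ) (i.e., 0 is an isolated point of the spectrum, or a is invertible). Let g : ℝ → ℝ be the continuous function g(t) = min(1, max(0, (2/θ)·t − 1)) (so g ≡ 0 on (−∞, θ/2] and g ≡ 1 on [θ, ∞)), and set p := cfc g a, the continuous functional calculus of g applied to a. Then p is a projection (p is self-adjoint and p·p = p), it satisfies a·p = a, and a and p are Cuntz equivalent: there exist sequences (vₙ) and (wₙ) in A with ‖vₙ · p · vₙ* − a‖ → 0 and ‖wₙ · a · wₙ* − p‖ → 0. -/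
/-!
Since the spectrum of `a` lies in `{0} ∪ [θ, ∞)`, the function `g` agrees there with the indicator
of `t ≠ 0`, so every identity between functional-calculus expressions in `a` that is needed can be
checked at `t = 0` and on `[θ, ∞)` only. There `g² = g` and `t g(t) = t`, so `p` is a projection
with `a p = a`. Both Cuntz subequivalences even hold exactly, with constant sequences:
`√a · p · √a = a`, and `w · a · w = p` for `w = g(a) a^{-1/2}`, which makes sense because `g`
vanishes near `0` on the spectrum.
-/

open Filter Topology Set

def CuntzSubequiv {A : Type*} [NormedRing A] [StarRing A] (a b : A) : Prop :=
  ∃ v : ℕ → A, Tendsto (fun n => ‖v n * b * star (v n) - a‖) atTop (𝓝 0)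

lemma CuntzSubequiv.of_mul_mul_star_eq {A : Type*} [NormedRing A] [StarRing A] {a b v : A}
    (h : v * b * star v = a) : CuntzSubequiv a b :=
  ⟨fun _ => v, by simp [h]⟩

section SpectralGap

variable {A : Type*} [CStarAlgebra A] {a : A}

lemma cfc_mul_mul_star_cfc {k f : ℝ → ℝ} (hk : ContinuousOn k (spectrum ℝ a))
    (hf : ContinuousOn f (spectrum ℝ a)) :
    cfc k a * cfc f a * star (cfc k a) = cfc (fun t => k t * f t * k t) a := by
  rw [(cfc_predicate k a).star_eq, ← cfc_mul k f a hk hf,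
    ← cfc_mul (fun t => k t * f t) k a (hk.mul hf) hk]

variable [PartialOrder A] [StarOrderedRing A] {θ : ℝ}

lemma eq_zero_or_le_of_mem_spectrum (ha : 0 ≤ a) (hsp : spectrum ℝ a ∩ Ioo 0 θ = ∅) {t : ℝ}
    (ht : t ∈ spectrum ℝ a) : t = 0 ∨ θ ≤ t := by
  rcases (spectrum_nonneg_of_nonneg ha ht).eq_or_lt with h | h
  · exact Or.inl h.symm
  · refine Or.inr (not_lt.mp fun htθ => ?_)
    exact (eq_empty_iff_forall_notMem.mp hsp) t ⟨ht, h, htθ⟩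

lemma cfc_congr_of_spectrum_gap (ha : 0 ≤ a) (hsp : spectrum ℝ a ∩ Ioo 0 θ = ∅)
    {φ ψ : ℝ → ℝ} (h0 : φ 0 = ψ 0) (hθ : ∀ t, θ ≤ t → φ t = ψ t) : cfc φ a = cfc ψ a :=
  cfc_congr fun t ht =>
    (eq_zero_or_le_of_mem_spectrum ha hsp ht).elim (fun h => h ▸ h0) (hθ t)

variable {f : ℝ → ℝ}

lemma cfc_mul_self_of_spectrum_gap (ha : 0 ≤ a) (hsp : spectrum ℝ a ∩ Ioo 0 θ = ∅)
    (hf : ContinuousOn f (spectrum ℝ a)) (hf0 : f 0 = 0) (hf1 : ∀ t, θ ≤ t → f t = 1) :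
    cfc f a * cfc f a = cfc f a := by
  rw [← cfc_mul f f a hf hf]
  exact cfc_congr_of_spectrum_gap ha hsp (by simp [hf0]) fun t ht => by simp [hf1 t ht]

lemma mul_cfc_of_spectrum_gap (ha : 0 ≤ a) (hsp : spectrum ℝ a ∩ Ioo 0 θ = ∅)
    (hf : ContinuousOn f (spectrum ℝ a)) (hf1 : ∀ t, θ ≤ t → f t = 1) :
    a * cfc f a = a := by
  calc a * cfc f a = cfc (fun t => t * f t) a := by
        rw [cfc_mul (fun t => t) f a continuousOn_id hf, cfc_id' ℝ a]
    _ = cfc (fun t => t) a :=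
        cfc_congr_of_spectrum_gap ha hsp (by simp) fun t ht => by simp [hf1 t ht]
    _ = a := cfc_id' ℝ a

lemma cuntzSubequiv_cfc_of_spectrum_gap (ha : 0 ≤ a) (hsp : spectrum ℝ a ∩ Ioo 0 θ = ∅)
    (hf : ContinuousOn f (spectrum ℝ a)) (hf1 : ∀ t, θ ≤ t → f t = 1) (hθ : 0 < θ) :
    CuntzSubequiv a (cfc f a) := by
  refine .of_mul_mul_star_eq (v := cfc Real.sqrt a) ?_
  rw [cfc_mul_mul_star_cfc Real.continuous_sqrt.continuousOn hf]
  nth_rw 2 [← cfc_id' ℝ a]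
  refine cfc_congr_of_spectrum_gap ha hsp (by simp) fun t ht => ?_
  simp [hf1 t ht, Real.mul_self_sqrt (hθ.le.trans ht)]

lemma cfc_cuntzSubequiv_of_spectrum_gap (ha : 0 ≤ a) (hsp : spectrum ℝ a ∩ Ioo 0 θ = ∅)
    (hf : ContinuousOn f (spectrum ℝ a)) (hf0 : f 0 = 0) (hf1 : ∀ t, θ ≤ t → f t = 1) (hθ : 0 < θ) :
    CuntzSubequiv (cfc f a) a := by
  -- `√(max t (θ/2))` is a continuous nonvanishing substitute for `√t`, equal to it for `t ≥ θ`.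
  have hden (t : ℝ) : 0 < √(max t (θ / 2)) := Real.sqrt_pos.mpr (lt_max_of_lt_right (by linarith))
  set k : ℝ → ℝ := fun t => f t / √(max t (θ / 2))
  have hk : ContinuousOn k (spectrum ℝ a) :=
    hf.div (by fun_prop) fun t _ => (hden t).ne'
  refine .of_mul_mul_star_eq (v := cfc k a) ?_
  nth_rw 2 [← cfc_id' ℝ a]
  rw [cfc_mul_mul_star_cfc (f := fun t => t) hk continuousOn_id]
  refine cfc_congr_of_spectrum_gap ha hsp (by simp [k, hf0]) fun t ht => ?_
  have ht0 : 0 < t := hθ.trans_le ht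
  simp only [k, hf1 t ht, max_eq_left (by linarith : θ / 2 ≤ t)]
  field_simp
  rw [Real.sq_sqrt ht0.le]

end SpectralGap

/-- The first case of the proof of Lemma 6.1: if `0` is isolated in the spectrum of a
positive element `a` (no spectrum in `(0, θ)`), then `p := g_θ(a)` is a projection
with `a·p = a` which is Cuntz equivalent to `a`. -/
theorem stmt9 {A : Type*} [CStarAlgebra A] [PartialOrder A] [StarOrderedRing A] (a : A) (ha : 0 ≤ a)
    (θ : ℝ) (hθ : 0 < θ) (hsp : spectrum ℝ a ∩ Set.Ioo 0 θ = ∅) :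
    let g : ℝ → ℝ := fun t => min 1 (max 0 ((2 / θ) * t - 1))
    let p : A := cfc g a
    IsSelfAdjoint p ∧ p * p = p ∧ a * p = a ∧
      (∃ v : ℕ → A,
        Filter.Tendsto (fun n => ‖v n * p * star (v n) - a‖) Filter.atTop (nhds 0)) ∧
      (∃ w : ℕ → A,
        Filter.Tendsto (fun n => ‖w n * a * star (w n) - p‖) Filter.atTop (nhds 0)) := by
  intro g p
  have hg : ContinuousOn g (spectrum ℝ a) := by fun_prop
  have hg0 : g 0 = 0 := by simp [g]
  have hg1 (t : ℝ) (ht : θ ≤ t) : g t = 1 := by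
    have : 1 ≤ 2 / θ * t - 1 := by
      rw [div_mul_eq_mul_div, le_sub_iff_add_le, le_div_iff₀ hθ]
      linarith
    simp [g, this]
  exact ⟨cfc_predicate g a, cfc_mul_self_of_spectrum_gap ha hsp hg hg0 hg1,
    mul_cfc_of_spectrum_gap ha hsp hg hg1,
    cuntzSubequiv_cfc_of_spectrum_gap ha hsp hg hg1 hθ,
    cfc_cuntzSubequiv_of_spectrum_gap ha hsp hg hg0 hg1 hθ⟩
end
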